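/- Let m ≥ 1 and let λ = [λ₁,λ₂] and μ = [μ₁,μ₂] be Young diagrams of size m with at most two rows and λ ≠ μ. Set ν₁ = λ₁ + μ₁ − m and ν₂ = |λ₁ − μ₁|. Then the number of oscillating tableaux of length m and shape [ν₁,ν₂] all of whose intermediate shapes lie in Γ(∞) equals |𝒯(λ)| · |𝒯(μ)|, the product of the numbers of standard Young tableaux of shapes λ and μ. -/

import Mathlib

/-!
On Γ(∞) oscillating tableaux behave like pairs of ballot walks. Writing `B m d` for the number of
walks of `m` steps `±1` on `ℕ` from `0` to `d`, the number of oscillating tableaux of length `m`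
with shapes in Γ(∞) ending at
* `[a, b]` with `b ≥ 1` is `B m (a + b) * B m (a - b)`,
* `[a]` is `C(B m a + 1, 2)`,
* the hook `[a, 1, 1]` is `C(B m a, 2)`, and `[1, 1, 1, 1]` is `C(B m 0, 2)`.
These are proved together by induction on `m`: the count at `m + 1` is the sum of the counts at `m`
over the neighbours of the shape inside Γ(∞), and the four formulas satisfy this recursion by
`B (m + 1) d = B m (d - 1) + B m (d + 1)` and `C(x + y, 2) = C(x, 2) + x y + C(y, 2)`.
In the same way standard tableaux of shape `[a, b]` are counted by `B (a + b) (a - b)`. For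
`λ ≠ μ`, the shape `ν` has `ν₂ ≥ 1` and `{ν₁ + ν₂, ν₁ - ν₂} = {λ₁ - λ₂, μ₁ - μ₂}`, so the first
formula is the product.
-/

/-- `AddBox μ ν` means `ν` is obtained from `μ` by adding a single box (`μ → ν`). -/
def AddBox (μ ν : YoungDiagram) : Prop := μ ≤ ν ∧ ν.card = μ.card + 1

/-- `AdjBox μ ν` means `μ ↔ ν`, i.e. the diagrams differ by a single box. -/
def AdjBox (μ ν : YoungDiagram) : Prop := AddBox μ ν ∨ AddBox ν μ

/-- `RowsEq μ L` means the row lengths of `μ` are given by the list `L`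
(rows beyond the length of `L` being empty). -/
def RowsEq (μ : YoungDiagram) (L : List ℕ) : Prop := ∀ i, μ.rowLen i = L.getD i 0

/-- `Λ(j,ℓ)`: Young diagrams of size `j` with at most two rows whose
row difference is at most `ℓ - 2`. -/
def LambdaSet (j ℓ : ℕ) : Set YoungDiagram :=
  {μ | μ.card = j ∧ μ.rowLen 2 = 0 ∧ μ.rowLen 0 - μ.rowLen 1 ≤ ℓ - 2}

/-- `Γ(ℓ)` for a finite `ℓ ≥ 6`. -/
def GammaSet (ℓ : ℕ) : Set YoungDiagram :=
  {μ | μ.colLen 0 + μ.colLen 1 ≤ 4 ∧ μ.rowLen 0 + μ.rowLen 1 ≤ ℓ - 2}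
    ∪ {μ | RowsEq μ [ℓ - 2, 1, 1]}

/-- `Γ(∞)`: diagrams whose first two column lengths sum to at most `4`. -/
def GammaInf : Set YoungDiagram := {μ | μ.colLen 0 + μ.colLen 1 ≤ 4}

/-- A Young-tableau path of length `m`, with the `j`-th shape restricted to lie in `P j`. -/
def IsTabPath (P : ℕ → Set YoungDiagram) (m : ℕ) (f : Fin (m + 1) → YoungDiagram) : Prop :=
  f 0 = ⊥ ∧ (∀ j : Fin m, AddBox (f j.castSucc) (f j.succ)) ∧
    ∀ j : Fin (m + 1), f j ∈ P (j : ℕ)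

/-- An oscillating-tableau path of length `m` with all shapes in `Γ`. -/
def IsOscPath (Γ : Set YoungDiagram) (m : ℕ) (f : Fin (m + 1) → YoungDiagram) : Prop :=
  f 0 = ⊥ ∧ (∀ j : Fin m, AdjBox (f j.castSucc) (f j.succ)) ∧
    ∀ j : Fin (m + 1), f j ∈ Γ

/-- The number of Young tableaux (paths) of length `m`, with shapes restricted by `P`,
whose final shape has row lengths `L`. -/
noncomputable def tabCount (P : ℕ → Set YoungDiagram) (m : ℕ) (L : List ℕ) : ℕ :=
  Nat.card {f : Fin (m + 1) → YoungDiagram //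
    IsTabPath P m f ∧ RowsEq (f (Fin.last m)) L}

/-- The number of oscillating tableaux of length `m` with shapes in `Γ`
whose final shape has row lengths `L`. -/
noncomputable def oscCount (Γ : Set YoungDiagram) (m : ℕ) (L : List ℕ) : ℕ :=
  Nat.card {f : Fin (m + 1) → YoungDiagram //
    IsOscPath Γ m f ∧ RowsEq (f (Fin.last m)) L}

/-- The number of oscillating tableaux of length `m` with shapes in `Γ` and final shape `ν`. -/
noncomputable def oscCountD (Γ : Set YoungDiagram) (m : ℕ) (ν : YoungDiagram) : ℕ :=
  Nat.card {f : Fin (m + 1) → YoungDiagram //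
    IsOscPath Γ m f ∧ f (Fin.last m) = ν}

open Finset YoungDiagram

section PathCount

variable {X : Type*} (R : X → X → Prop) (S : Set X) (x₀ : X)

def IsPath (m : ℕ) (f : Fin (m + 1) → X) : Prop :=
  f 0 = x₀ ∧ (∀ j : Fin m, R (f j.castSucc) (f j.succ)) ∧ ∀ j, f j ∈ S

abbrev PathTo (m : ℕ) (x : X) : Type _ :=
  {f : Fin (m + 1) → X // IsPath R S x₀ m f ∧ f (Fin.last m) = x}

noncomputable def pathCount (m : ℕ) (x : X) : ℕ := Nat.card (PathTo R S x₀ m x)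

variable {R S x₀}

instance subsingleton_pathTo_zero (x : X) : Subsingleton (PathTo R S x₀ 0 x) :=
  ⟨fun f g => Subtype.ext <| funext fun j => by rw [Fin.fin_one_eq_zero j, f.2.1.1, g.2.1.1]⟩

lemma pathCount_zero_self (h : x₀ ∈ S) : pathCount R S x₀ 0 x₀ = 1 :=
  Nat.card_eq_one_iff_unique.2 ⟨inferInstance, ⟨⟨fun _ => x₀, ⟨rfl, Fin.elim0, fun _ => h⟩, rfl⟩⟩⟩

lemma pathCount_zero_of_ne {x : X} (h : x ≠ x₀) : pathCount R S x₀ 0 x = 0 :=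
  Nat.card_eq_zero.2 (.inl ⟨fun f => h (f.2.2.symm.trans f.2.1.1)⟩)

def pathSuccEquiv {m : ℕ} {x : X} (hx : x ∈ S) :
    PathTo R S x₀ (m + 1) x ≃ Σ y : {y // y ∈ S ∧ R y x}, PathTo R S x₀ m y where
  toFun f := ⟨⟨f.1 (Fin.last m).castSucc, f.2.1.2.2 _, by
      have := f.2.1.2.1 (Fin.last m); rwa [Fin.succ_last, f.2.2] at this⟩,
    ⟨Fin.init f.1, ⟨f.2.1.1, fun j => f.2.1.2.1 j.castSucc, fun j => f.2.1.2.2 _⟩, rfl⟩⟩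
  invFun g := ⟨Fin.snoc g.2.1 x, ⟨by rw [← Fin.castSucc_zero, Fin.snoc_castSucc]; exact g.2.2.1.1,
      Fin.lastCases (by simpa [g.2.2.2] using g.1.2.2) fun j => by
        rw [Fin.succ_castSucc, Fin.snoc_castSucc, Fin.snoc_castSucc]; exact g.2.2.1.2.1 j,
      Fin.lastCases (by simpa using hx) fun j => by simpa using g.2.2.1.2.2 j⟩, by simp⟩
  left_inv f := Subtype.ext <| by
    conv_rhs => rw [← Fin.snoc_init_self f.1, f.2.2]
  right_inv g :=
    Sigma.subtype_ext (Subtype.ext <| by simpa using g.2.2.2) (Fin.init_snoc (α := fun _ => X) _ _)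

lemma finite_pathTo (hfin : ∀ x ∈ S, {y | y ∈ S ∧ R y x}.Finite) (m : ℕ) (x : X) :
    Finite (PathTo R S x₀ m x) := by
  induction m generalizing x with
  | zero => infer_instance
  | succ m ih =>
    by_cases hx : x ∈ S
    · have : Finite {y // y ∈ S ∧ R y x} := (hfin x hx).to_subtype
      have : ∀ y : {y // y ∈ S ∧ R y x}, Finite (PathTo R S x₀ m y) := fun y => ih y
      exact Finite.of_equiv _ (pathSuccEquiv hx).symm
    · have : IsEmpty (PathTo R S x₀ (m + 1) x) := ⟨fun f => hx (f.2.2 ▸ f.2.1.2.2 _)⟩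
      infer_instance

lemma pathCount_succ (hfin : ∀ x ∈ S, {y | y ∈ S ∧ R y x}.Finite) {m : ℕ} {x : X}
    (hx : x ∈ S) (N : Finset X) (hN : ∀ y, y ∈ N ↔ y ∈ S ∧ R y x) :
    pathCount R S x₀ (m + 1) x = ∑ y ∈ N, pathCount R S x₀ m y := by
  have := finite_pathTo (x₀ := x₀) hfin m
  let e : {y // y ∈ S ∧ R y x} ≃ N := Equiv.subtypeEquivRight fun y => (hN y).symm
  rw [pathCount, Nat.card_congr ((pathSuccEquiv hx).trans (e.sigmaCongrLeft' ..)),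
    Nat.card_sigma, ← Finset.sum_coe_sort N]
  rfl

end PathCount

namespace YoungDiagram

lemma ext_rowLen {μ ν : YoungDiagram} (h : ∀ i, μ.rowLen i = ν.rowLen i) : μ = ν := by
  ext ⟨i, j⟩
  simp only [mem_cells, mem_iff_lt_rowLen, h]

lemma le_iff_forall_rowLen_le {μ ν : YoungDiagram} : μ ≤ ν ↔ ∀ i, μ.rowLen i ≤ ν.rowLen i := by
  refine ⟨fun h i => ?_, fun h c hc => ?_⟩
  · by_contra! hi
    exact (mem_iff_lt_rowLen.1 (h (mem_iff_lt_rowLen.2 hi))).false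
  · exact mem_iff_lt_rowLen.2 ((mem_iff_lt_rowLen.1 hc).trans_le (h c.1))

lemma rowLen_eq_zero_of_le {μ : YoungDiagram} {i k : ℕ} (hk : μ.rowLen k = 0) (hik : k ≤ i) :
    μ.rowLen i = 0 :=
  Nat.eq_zero_of_le_zero (hk ▸ μ.rowLen_anti k i hik)

lemma card_eq_sum_rowLen {μ : YoungDiagram} {k : ℕ} (hk : μ.rowLen k = 0) :
    μ.card = ∑ i ∈ range k, μ.rowLen i := by
  have hmaps : (μ.cells : Set (ℕ × ℕ)).MapsTo Prod.fst (range k) := fun c hc => by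
    by_contra! hck
    have := mem_iff_lt_rowLen.1 ((mem_cells c).1 hc)
    rw [rowLen_eq_zero_of_le hk (by simpa using hck)] at this
    omega
  rw [YoungDiagram.card, card_eq_sum_card_fiberwise hmaps]
  exact sum_congr rfl fun i _ => (μ.rowLen_eq_card).symm

lemma rowLen_ofRowLens_eq_getD {w : List ℕ} {hw : w.SortedGE} (i : ℕ) :
    (ofRowLens w hw).rowLen i = w.getD i 0 := by
  refine eq_of_forall_lt_iff fun j => ?_
  rw [← mem_iff_lt_rowLen, mem_ofRowLens, List.getD_eq_getElem?_getD]
  by_cases hi : i < w.length <;> simp [hi]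

lemma mem_range_prod_range_of_card_le {μ : YoungDiagram} {n : ℕ} (hμ : μ.card ≤ n) {c : ℕ × ℕ}
    (hc : c ∈ μ.cells) : c ∈ range n ×ˢ range n := by
  have hrow : c.2 < μ.rowLen c.1 := mem_iff_lt_rowLen.1 hc
  have hcol : c.1 < μ.colLen c.2 := mem_iff_lt_colLen.1 hc
  have hrow_le : μ.rowLen c.1 ≤ μ.card :=
    μ.rowLen_eq_card ▸ card_le_card (filter_subset _ _)
  have hcol_le : μ.colLen c.2 ≤ μ.card :=
    μ.colLen_eq_card ▸ card_le_card (filter_subset _ _)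
  simp only [mem_product, mem_range]
  omega

lemma finite_setOf_card_le (n : ℕ) : {μ : YoungDiagram | μ.card ≤ n}.Finite := by
  refine Set.Finite.of_finite_image ?_ (fun μ _ ν _ h => YoungDiagram.ext h :
    Set.InjOn cells _)
  refine (range n ×ˢ range n).powerset.finite_toSet.subset ?_
  rintro _ ⟨μ, hμ, rfl⟩
  exact mem_powerset.2 fun c hc => mem_range_prod_range_of_card_le hμ hc

end YoungDiagram

section FourRows

lemma sortedGE_min_chain (a b c d : ℕ) :
    [a, min a b, min (min a b) c, min (min (min a b) c) d].SortedGE := by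
  refine List.Pairwise.sortedGE ?_
  simp only [List.pairwise_cons, List.mem_cons, List.not_mem_nil, List.Pairwise.nil,
    forall_eq_or_imp, forall_eq, or_false, IsEmpty.forall_iff, implies_true, and_true]
  omega

/-- The `min`s make this total; for `a ≥ b ≥ c ≥ d` the rows are `a, b, c, d`. -/
def ofRowLens4 (a b c d : ℕ) : YoungDiagram := ofRowLens _ (sortedGE_min_chain a b c d)

variable {a b c d : ℕ}

lemma rowLen_ofRowLens4 (hb : b ≤ a) (hc : c ≤ b) (hd : d ≤ c) (i : ℕ) :
    (ofRowLens4 a b c d).rowLen i = [a, b, c, d].getD i 0 := by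
  rw [ofRowLens4, rowLen_ofRowLens_eq_getD, min_eq_right hb, min_eq_right hc, min_eq_right hd]

lemma rowLen_succ_le_four (μ : YoungDiagram) :
    μ.rowLen 1 ≤ μ.rowLen 0 ∧ μ.rowLen 2 ≤ μ.rowLen 1 ∧ μ.rowLen 3 ≤ μ.rowLen 2 ∧
      μ.rowLen 4 ≤ μ.rowLen 3 :=
  ⟨μ.rowLen_anti _ _ (by omega), μ.rowLen_anti _ _ (by omega), μ.rowLen_anti _ _ (by omega),
    μ.rowLen_anti _ _ (by omega)⟩

lemma eq_ofRowLens4_iff (hb : b ≤ a) (hc : c ≤ b) (hd : d ≤ c) {μ : YoungDiagram} :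
    μ = ofRowLens4 a b c d ↔
      μ.rowLen 0 = a ∧ μ.rowLen 1 = b ∧ μ.rowLen 2 = c ∧ μ.rowLen 3 = d ∧ μ.rowLen 4 = 0 := by
  constructor
  · rintro rfl
    simp [rowLen_ofRowLens4 hb hc hd]
  · rintro ⟨h0, h1, h2, h3, h4⟩
    refine ext_rowLen fun i => ?_
    rw [rowLen_ofRowLens4 hb hc hd]
    match i with
    | 0 | 1 | 2 | 3 => simpa
    | i + 4 => simpa using rowLen_eq_zero_of_le h4 (by omega)

lemma ofRowLens4_inj {a' b' c' d' : ℕ} (hb : b ≤ a) (hc : c ≤ b) (hd : d ≤ c)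
    (hb' : b' ≤ a') (hc' : c' ≤ b') (hd' : d' ≤ c') :
    ofRowLens4 a b c d = ofRowLens4 a' b' c' d' ↔ a = a' ∧ b = b' ∧ c = c' ∧ d = d' := by
  simp [eq_ofRowLens4_iff hb' hc' hd', rowLen_ofRowLens4 hb hc hd]

lemma addBox_iff_rowLen {μ ν : YoungDiagram} (hν : ν.rowLen 4 = 0) :
    AddBox μ ν ↔ μ.rowLen 4 = 0 ∧ μ.rowLen 0 ≤ ν.rowLen 0 ∧ μ.rowLen 1 ≤ ν.rowLen 1 ∧
      μ.rowLen 2 ≤ ν.rowLen 2 ∧ μ.rowLen 3 ≤ ν.rowLen 3 ∧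
      ν.rowLen 0 + ν.rowLen 1 + ν.rowLen 2 + ν.rowLen 3 =
        μ.rowLen 0 + μ.rowLen 1 + μ.rowLen 2 + μ.rowLen 3 + 1 := by
  rw [AddBox, le_iff_forall_rowLen_le, card_eq_sum_rowLen hν]
  constructor
  · rintro ⟨hle, hcard⟩
    have hμ : μ.rowLen 4 = 0 := Nat.eq_zero_of_le_zero (hν ▸ hle 4)
    rw [card_eq_sum_rowLen hμ] at hcard
    simp only [sum_range_succ, sum_range_zero, zero_add] at hcard
    exact ⟨hμ, hle 0, hle 1, hle 2, hle 3, hcard⟩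
  · rintro ⟨hμ, h0, h1, h2, h3, hcard⟩
    refine ⟨fun i => ?_, ?_⟩
    · match i with
      | 0 => exact h0
      | 1 => exact h1
      | 2 => exact h2
      | 3 => exact h3
      | i + 4 => simp [rowLen_eq_zero_of_le hμ (show 4 ≤ i + 4 by omega)]
    · simpa [card_eq_sum_rowLen hμ, sum_range_succ] using hcard

lemma mem_gammaInf_iff {μ : YoungDiagram} : μ ∈ GammaInf ↔
    μ.rowLen 4 = 0 ∧ (μ.rowLen 2 = 0 ∨ μ.rowLen 3 = 0 ∧ μ.rowLen 1 ≤ 1 ∨ μ.rowLen 0 ≤ 1) := by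
  have col0 : ∀ k, k < μ.colLen 0 ↔ 0 < μ.rowLen k := fun k =>
    mem_iff_lt_colLen.symm.trans mem_iff_lt_rowLen
  have col1 : ∀ k, k < μ.colLen 1 ↔ 1 < μ.rowLen k := fun k =>
    mem_iff_lt_colLen.symm.trans mem_iff_lt_rowLen
  have := μ.colLen_anti 0 1 zero_le_one
  have := col0 2; have := col0 3; have := col0 4; have := col1 0; have := col1 1
  rw [GammaInf, Set.mem_ofPred_eq]
  omega

end FourRows

noncomputable def tabCountD (m : ℕ) (ν : YoungDiagram) : ℕ := pathCount AddBox Set.univ ⊥ m ν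

lemma card_le_of_adjBox {μ ν : YoungDiagram} (h : AdjBox μ ν) : μ.card ≤ ν.card + 1 := by
  rcases h with h | h <;> [have := h.2; have := h.2] <;> omega

lemma finite_setOf_adjBox (S : Set YoungDiagram) (ν : YoungDiagram) :
    {μ | μ ∈ S ∧ AdjBox μ ν}.Finite :=
  (finite_setOf_card_le (ν.card + 1)).subset fun _ h => card_le_of_adjBox h.2

lemma tabCountD_succ {m : ℕ} {ν : YoungDiagram} {L : List YoungDiagram} (hL : L.Nodup)
    (hN : ∀ μ, μ ∈ L ↔ AddBox μ ν) :
    tabCountD (m + 1) ν = (L.map (tabCountD m)).sum := by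
  classical
  rw [← List.sum_toFinset _ hL]
  exact pathCount_succ (fun x _ => (finite_setOf_adjBox _ x).subset fun _ h => ⟨h.1, .inl h.2⟩)
    (Set.mem_univ _) _ (by simpa using hN)

lemma oscCountD_succ {m : ℕ} {ν : YoungDiagram} (hν : ν ∈ GammaInf) {L : List YoungDiagram}
    (hL : L.Nodup) (hN : ∀ μ, μ ∈ L ↔ μ ∈ GammaInf ∧ AdjBox μ ν) :
    oscCountD GammaInf (m + 1) ν = (L.map (oscCountD GammaInf m)).sum := by
  classical
  rw [← List.sum_toFinset _ hL]
  exact pathCount_succ (fun x _ => finite_setOf_adjBox _ x) hν _ (by simpa using hN)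

section Neighbours

variable {a b c d : ℕ} {μ : YoungDiagram}

lemma ofRowLens4_zero : ofRowLens4 0 0 0 0 = ⊥ :=
  ((eq_ofRowLens4_iff le_rfl le_rfl le_rfl).2 (by simp [rowLen])).symm

lemma ofRowLens4_mem_gammaInf (hb : b ≤ a) (hc : c ≤ b) (hd : d ≤ c)
    (h : c = 0 ∨ d = 0 ∧ b ≤ 1 ∨ a ≤ 1) : ofRowLens4 a b c d ∈ GammaInf := by
  simpa [mem_gammaInf_iff, rowLen_ofRowLens4 hb hc hd] using h

lemma addBox_ofRowLens4_iff (hb : b ≤ a) (hc : c ≤ b) (hd : d ≤ c) :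
    AddBox μ (ofRowLens4 a b c d) ↔ μ.rowLen 4 = 0 ∧ μ.rowLen 0 ≤ a ∧ μ.rowLen 1 ≤ b ∧
      μ.rowLen 2 ≤ c ∧ μ.rowLen 3 ≤ d ∧
      a + b + c + d = μ.rowLen 0 + μ.rowLen 1 + μ.rowLen 2 + μ.rowLen 3 + 1 := by
  rw [addBox_iff_rowLen (by simp [rowLen_ofRowLens4 hb hc hd])]
  simp [rowLen_ofRowLens4 hb hc hd]

lemma mem_gammaInf_and_adjBox_ofRowLens4_iff (hb : b ≤ a) (hc : c ≤ b) (hd : d ≤ c) :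
    μ ∈ GammaInf ∧ AdjBox μ (ofRowLens4 a b c d) ↔ μ.rowLen 4 = 0 ∧
      (μ.rowLen 2 = 0 ∨ μ.rowLen 3 = 0 ∧ μ.rowLen 1 ≤ 1 ∨ μ.rowLen 0 ≤ 1) ∧
      (μ.rowLen 0 ≤ a ∧ μ.rowLen 1 ≤ b ∧ μ.rowLen 2 ≤ c ∧ μ.rowLen 3 ≤ d ∧
          a + b + c + d = μ.rowLen 0 + μ.rowLen 1 + μ.rowLen 2 + μ.rowLen 3 + 1 ∨
        a ≤ μ.rowLen 0 ∧ b ≤ μ.rowLen 1 ∧ c ≤ μ.rowLen 2 ∧ d ≤ μ.rowLen 3 ∧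
          μ.rowLen 0 + μ.rowLen 1 + μ.rowLen 2 + μ.rowLen 3 = a + b + c + d + 1) := by
  rw [mem_gammaInf_iff, AdjBox, and_assoc]
  refine and_congr_right fun hμ => and_congr_right fun _ => ?_
  rw [addBox_ofRowLens4_iff hb hc hd, addBox_iff_rowLen hμ]
  simp [hμ, rowLen_ofRowLens4 hb hc hd]

end Neighbours

/-- The number of walks of `m` steps `±1` on `ℕ` from `0` to `d`. -/
def ballot : ℕ → ℕ → ℕ
  | 0, d => if d = 0 then 1 else 0
  | m + 1, 0 => ballot m 1
  | m + 1, d + 1 => ballot m d + ballot m (d + 2)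

@[simp]
lemma ballot_succ_zero (m : ℕ) : ballot (m + 1) 0 = ballot m 1 := rfl

lemma ballot_succ_of_pos {m d : ℕ} (hd : 0 < d) :
    ballot (m + 1) d = ballot m (d - 1) + ballot m (d + 1) := by
  obtain ⟨d, rfl⟩ := Nat.exists_eq_add_one_of_ne_zero hd.ne'
  rfl

lemma ballot_eq_zero_of_lt {m d : ℕ} (h : m < d) : ballot m d = 0 := by
  induction m generalizing d with
  | zero => simp [ballot, h.ne']
  | succ m ih => rw [ballot_succ_of_pos (by omega), ih (by omega), ih (by omega)]

lemma choose_two_succ (x : ℕ) : (x + 1).choose 2 = x + x.choose 2 := by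
  simp [Nat.choose_succ_succ']

lemma choose_two_add (x y : ℕ) : (x + y).choose 2 = x.choose 2 + x * y + y.choose 2 := by
  rw [Nat.add_choose_eq]
  simp [Finset.Nat.antidiagonal_succ]
  ring

lemma choose_two_add_add_one (x y : ℕ) :
    (x + y + 1).choose 2 = (x + 1).choose 2 + x * y + (y + 1).choose 2 := by
  rw [choose_two_succ, choose_two_succ, choose_two_succ, choose_two_add]
  ring

lemma choose_two_succ_add_choose_two (x : ℕ) : (x + 1).choose 2 + x.choose 2 = x * x := by
  induction x with
  | zero => rfl
  | succ n ih =>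
    rw [choose_two_succ (n + 1)]
    rw [choose_two_succ n] at ih ⊢
    nlinarith

section Tableaux

variable {m a b : ℕ}

lemma tabCountD_succ_oneRow (ha : 0 < a) :
    tabCountD (m + 1) (ofRowLens4 a 0 0 0) = tabCountD m (ofRowLens4 (a - 1) 0 0 0) := by
  rw [tabCountD_succ (L := [ofRowLens4 (a - 1) 0 0 0]) (List.nodup_singleton _) fun μ => by
    rw [addBox_ofRowLens4_iff (Nat.zero_le a) le_rfl le_rfl]
    have := rowLen_succ_le_four μ
    simp (disch := omega) only [List.mem_singleton, eq_ofRowLens4_iff]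
    omega]
  simp

lemma tabCountD_succ_twoRow (hb : 0 < b) (hab : b < a) :
    tabCountD (m + 1) (ofRowLens4 a b 0 0) =
      tabCountD m (ofRowLens4 (a - 1) b 0 0) + tabCountD m (ofRowLens4 a (b - 1) 0 0) := by
  rw [tabCountD_succ (L := [ofRowLens4 (a - 1) b 0 0, ofRowLens4 a (b - 1) 0 0]) ?_ fun μ => by
    rw [addBox_ofRowLens4_iff hab.le (Nat.zero_le b) le_rfl]
    have := rowLen_succ_le_four μ
    simp (disch := omega) only [List.mem_cons, List.not_mem_nil, or_false, eq_ofRowLens4_iff]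
    omega]
  · simp
  · simp (disch := omega) [ofRowLens4_inj]
    omega

lemma tabCountD_succ_square (ha : 0 < a) :
    tabCountD (m + 1) (ofRowLens4 a a 0 0) = tabCountD m (ofRowLens4 a (a - 1) 0 0) := by
  rw [tabCountD_succ (L := [ofRowLens4 a (a - 1) 0 0]) (List.nodup_singleton _) fun μ => by
    rw [addBox_ofRowLens4_iff le_rfl (Nat.zero_le a) le_rfl]
    have := rowLen_succ_le_four μ
    simp (disch := omega) only [List.mem_singleton, eq_ofRowLens4_iff]
    omega]
  simp

theorem tabCountD_ofRowLens4 (hb : b ≤ a) (hm : a + b = m) :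
    tabCountD m (ofRowLens4 a b 0 0) = ballot m (a - b) := by
  induction m generalizing a b with
  | zero =>
    obtain ⟨rfl, rfl⟩ : a = 0 ∧ b = 0 := by omega
    rw [ofRowLens4_zero]
    exact pathCount_zero_self (Set.mem_univ _)
  | succ m ih =>
    rcases Nat.eq_zero_or_pos b with rfl | hb0
    · rw [tabCountD_succ_oneRow (by omega), ih (Nat.zero_le _) (by omega),
        ballot_succ_of_pos (by omega), ballot_eq_zero_of_lt (d := a - 0 + 1) (by omega)]
      simp
    rcases hb.lt_or_eq with hab | rfl
    · rw [tabCountD_succ_twoRow hb0 hab, ih (by omega) (by omega), ih (by omega) (by omega),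
        ballot_succ_of_pos (by omega), show a - 1 - b = a - b - 1 by omega,
        show a - (b - 1) = a - b + 1 by omega]
    · rw [tabCountD_succ_square hb0, ih (by omega) (by omega), Nat.sub_self,
        Nat.sub_sub_self hb0]
      rfl

end Tableaux

structure OscCountFormula (m : ℕ) : Prop where
  twoRow : ∀ a b, 1 ≤ b → b ≤ a →
    oscCountD GammaInf m (ofRowLens4 a b 0 0) = ballot m (a + b) * ballot m (a - b)
  oneRow : ∀ a, oscCountD GammaInf m (ofRowLens4 a 0 0 0) = (ballot m a + 1).choose 2
  hook : ∀ a, 1 ≤ a → oscCountD GammaInf m (ofRowLens4 a 1 1 0) = (ballot m a).choose 2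
  column : oscCountD GammaInf m (ofRowLens4 1 1 1 1) = (ballot m 0).choose 2

lemma oscCountFormula_zero : OscCountFormula 0 := by
  have count_zero : ∀ {a b c d : ℕ}, b ≤ a → c ≤ b → d ≤ c → 0 < a →
      oscCountD GammaInf 0 (ofRowLens4 a b c d) = 0 := fun hb hc hd ha =>
    pathCount_zero_of_ne fun h => by
      rw [← ofRowLens4_zero, ofRowLens4_inj hb hc hd le_rfl le_rfl le_rfl] at h
      omega
  refine ⟨fun a b hb hab => ?_, fun a => ?_, fun a ha => ?_, ?_⟩
  · rw [count_zero hab (Nat.zero_le b) le_rfl (by omega), ballot_eq_zero_of_lt (d := a + b)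
      (by omega), zero_mul]
  · rcases Nat.eq_zero_or_pos a with rfl | ha
    · rw [ofRowLens4_zero]
      exact pathCount_zero_self (by simp [mem_gammaInf_iff, rowLen])
    · rw [count_zero (Nat.zero_le a) le_rfl le_rfl ha, ballot_eq_zero_of_lt ha]
      rfl
  · rw [count_zero ha le_rfl (Nat.zero_le 1) (by omega), ballot_eq_zero_of_lt ha]
    rfl
  · exact count_zero le_rfl le_rfl le_rfl one_pos

namespace OscCountFormula

variable {m a b : ℕ}

lemma twoRow_succ_of_lt (ih : OscCountFormula m) (hb : 2 ≤ b) (hab : b < a) :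
    oscCountD GammaInf (m + 1) (ofRowLens4 a b 0 0) =
      ballot (m + 1) (a + b) * ballot (m + 1) (a - b) := by
  rw [oscCountD_succ (ofRowLens4_mem_gammaInf hab.le (Nat.zero_le b) le_rfl (.inl rfl))
    (L := [ofRowLens4 (a + 1) b 0 0, ofRowLens4 (a - 1) b 0 0, ofRowLens4 a (b + 1) 0 0,
      ofRowLens4 a (b - 1) 0 0]) (by simp (disch := omega) [ofRowLens4_inj]; omega) fun μ => by
    rw [mem_gammaInf_and_adjBox_ofRowLens4_iff hab.le (Nat.zero_le b) le_rfl]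
    have := rowLen_succ_le_four μ
    simp (disch := omega) only [List.mem_cons, List.not_mem_nil, or_false, eq_ofRowLens4_iff]
    omega]
  simp only [List.map_cons, List.map_nil, List.sum_cons, List.sum_nil, add_zero]
  rw [ih.twoRow _ _ (by omega) (by omega), ih.twoRow _ _ (by omega) (by omega),
    ih.twoRow _ _ (by omega) (by omega), ih.twoRow _ _ (by omega) (by omega),
    ballot_succ_of_pos (by omega), ballot_succ_of_pos (by omega),
    show a + 1 + b = a + b + 1 by omega, show a + 1 - b = a - b + 1 by omega,
    show a - 1 + b = a + b - 1 by omega, show a - 1 - b = a - b - 1 by omega,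
    show a + (b + 1) = a + b + 1 by omega, show a - (b + 1) = a - b - 1 by omega,
    show a + (b - 1) = a + b - 1 by omega, show a - (b - 1) = a - b + 1 by omega]
  ring

lemma twoRow_succ_square (ih : OscCountFormula m) (ha : 2 ≤ a) :
    oscCountD GammaInf (m + 1) (ofRowLens4 a a 0 0) =
      ballot (m + 1) (a + a) * ballot (m + 1) (a - a) := by
  rw [oscCountD_succ (ofRowLens4_mem_gammaInf le_rfl (Nat.zero_le a) le_rfl (.inl rfl))
    (L := [ofRowLens4 (a + 1) a 0 0, ofRowLens4 a (a - 1) 0 0])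
    (by simp (disch := omega) [ofRowLens4_inj]) fun μ => by
    rw [mem_gammaInf_and_adjBox_ofRowLens4_iff le_rfl (Nat.zero_le a) le_rfl]
    have := rowLen_succ_le_four μ
    simp (disch := omega) only [List.mem_cons, List.not_mem_nil, or_false, eq_ofRowLens4_iff]
    omega]
  simp only [List.map_cons, List.map_nil, List.sum_cons, List.sum_nil, add_zero]
  rw [ih.twoRow _ _ (by omega) (by omega), ih.twoRow _ _ (by omega) (by omega),
    ballot_succ_of_pos (by omega), Nat.sub_self, ballot_succ_zero,
    show a + 1 + a = a + a + 1 by omega, show a + 1 - a = 1 by omega,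
    show a + (a - 1) = a + a - 1 by omega, show a - (a - 1) = 1 by omega]
  ring

lemma twoRow_succ_one (ih : OscCountFormula m) (ha : 2 ≤ a) :
    oscCountD GammaInf (m + 1) (ofRowLens4 a 1 0 0) =
      ballot (m + 1) (a + 1) * ballot (m + 1) (a - 1) := by
  rw [oscCountD_succ (ofRowLens4_mem_gammaInf (by omega) zero_le_one le_rfl (.inl rfl))
    (L := [ofRowLens4 (a + 1) 1 0 0, ofRowLens4 (a - 1) 1 0 0, ofRowLens4 a 2 0 0,
      ofRowLens4 a 0 0 0, ofRowLens4 a 1 1 0])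
    (by simp (disch := omega) [ofRowLens4_inj]; omega) fun μ => by
    rw [mem_gammaInf_and_adjBox_ofRowLens4_iff (by omega) zero_le_one le_rfl]
    have := rowLen_succ_le_four μ
    simp (disch := omega) only [List.mem_cons, List.not_mem_nil, or_false, eq_ofRowLens4_iff]
    omega]
  simp only [List.map_cons, List.map_nil, List.sum_cons, List.sum_nil, add_zero]
  rw [ih.twoRow _ _ le_rfl (by omega), ih.twoRow _ _ le_rfl (by omega),
    ih.twoRow _ _ (by omega) ha, ih.oneRow, ih.hook _ (by omega), choose_two_succ_add_choose_two,
    ballot_succ_of_pos (by omega), ballot_succ_of_pos (by omega),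
    show a + 1 + 1 = a + 2 by omega, show a + 1 - 1 = a by omega,
    show a - 1 + 1 = a by omega, show a - 1 - 1 = a - 2 by omega]
  ring

lemma twoRow_succ_one_one (ih : OscCountFormula m) :
    oscCountD GammaInf (m + 1) (ofRowLens4 1 1 0 0) =
      ballot (m + 1) (1 + 1) * ballot (m + 1) (1 - 1) := by
  rw [oscCountD_succ (ofRowLens4_mem_gammaInf le_rfl zero_le_one le_rfl (.inl rfl))
    (L := [ofRowLens4 2 1 0 0, ofRowLens4 1 0 0 0, ofRowLens4 1 1 1 0])
    (by simp (disch := omega) [ofRowLens4_inj]) fun μ => by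
    rw [mem_gammaInf_and_adjBox_ofRowLens4_iff le_rfl zero_le_one le_rfl]
    have := rowLen_succ_le_four μ
    simp (disch := omega) only [List.mem_cons, List.not_mem_nil, or_false, eq_ofRowLens4_iff]
    omega]
  simp only [List.map_cons, List.map_nil, List.sum_cons, List.sum_nil, add_zero]
  rw [ih.twoRow 2 1 le_rfl (by omega), ih.oneRow, ih.hook _ le_rfl,
    choose_two_succ_add_choose_two]
  simp only [Nat.reduceAdd, Nat.reduceSub, ballot_succ_zero, ballot_succ_of_pos two_pos]
  ring

lemma oneRow_succ (ih : OscCountFormula m) (ha : 1 ≤ a) :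
    oscCountD GammaInf (m + 1) (ofRowLens4 a 0 0 0) = (ballot (m + 1) a + 1).choose 2 := by
  rw [oscCountD_succ (ofRowLens4_mem_gammaInf (Nat.zero_le a) le_rfl le_rfl (.inl rfl))
    (L := [ofRowLens4 (a + 1) 0 0 0, ofRowLens4 (a - 1) 0 0 0, ofRowLens4 a 1 0 0])
    (by simp (disch := omega) [ofRowLens4_inj]; omega) fun μ => by
    rw [mem_gammaInf_and_adjBox_ofRowLens4_iff (Nat.zero_le a) le_rfl le_rfl]
    have := rowLen_succ_le_four μ
    simp (disch := omega) only [List.mem_cons, List.not_mem_nil, or_false, eq_ofRowLens4_iff]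
    omega]
  simp only [List.map_cons, List.map_nil, List.sum_cons, List.sum_nil, add_zero]
  rw [ih.oneRow, ih.oneRow, ih.twoRow _ _ le_rfl ha, ballot_succ_of_pos ha,
    choose_two_add_add_one]
  ring

lemma oneRow_succ_zero (ih : OscCountFormula m) :
    oscCountD GammaInf (m + 1) (ofRowLens4 0 0 0 0) = (ballot (m + 1) 0 + 1).choose 2 := by
  rw [oscCountD_succ (ofRowLens4_mem_gammaInf le_rfl le_rfl le_rfl (.inl rfl))
    (L := [ofRowLens4 1 0 0 0]) (List.nodup_singleton _) fun μ => by
    rw [mem_gammaInf_and_adjBox_ofRowLens4_iff le_rfl le_rfl le_rfl]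
    have := rowLen_succ_le_four μ
    simp (disch := omega) only [List.mem_singleton, eq_ofRowLens4_iff]
    omega]
  simp [ih.oneRow]

lemma hook_succ (ih : OscCountFormula m) (ha : 2 ≤ a) :
    oscCountD GammaInf (m + 1) (ofRowLens4 a 1 1 0) = (ballot (m + 1) a).choose 2 := by
  rw [oscCountD_succ
    (ofRowLens4_mem_gammaInf (by omega) le_rfl zero_le_one (.inr (.inl ⟨rfl, le_rfl⟩)))
    (L := [ofRowLens4 a 1 0 0, ofRowLens4 (a + 1) 1 1 0, ofRowLens4 (a - 1) 1 1 0])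
    (by simp (disch := omega) [ofRowLens4_inj]; omega) fun μ => by
    rw [mem_gammaInf_and_adjBox_ofRowLens4_iff (by omega) le_rfl zero_le_one]
    have := rowLen_succ_le_four μ
    simp (disch := omega) only [List.mem_cons, List.not_mem_nil, or_false, eq_ofRowLens4_iff]
    omega]
  simp only [List.map_cons, List.map_nil, List.sum_cons, List.sum_nil, add_zero]
  rw [ih.twoRow _ _ le_rfl (by omega), ih.hook _ (by omega), ih.hook _ (by omega),
    ballot_succ_of_pos (by omega), choose_two_add]
  ring

-- `[1, 1, 1, 1]` takes the place of the missing hook `[0, 1, 1]`.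
lemma hook_succ_one (ih : OscCountFormula m) :
    oscCountD GammaInf (m + 1) (ofRowLens4 1 1 1 0) = (ballot (m + 1) 1).choose 2 := by
  rw [oscCountD_succ (ofRowLens4_mem_gammaInf le_rfl le_rfl zero_le_one (.inr (.inr le_rfl)))
    (L := [ofRowLens4 1 1 0 0, ofRowLens4 2 1 1 0, ofRowLens4 1 1 1 1])
    (by simp (disch := omega) [ofRowLens4_inj]) fun μ => by
    rw [mem_gammaInf_and_adjBox_ofRowLens4_iff le_rfl le_rfl zero_le_one]
    have := rowLen_succ_le_four μ
    simp (disch := omega) only [List.mem_cons, List.not_mem_nil, or_false, eq_ofRowLens4_iff]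
    omega]
  simp only [List.map_cons, List.map_nil, List.sum_cons, List.sum_nil, add_zero]
  rw [ih.twoRow 1 1 le_rfl le_rfl, ih.hook 2 (by omega), ih.column, ballot_succ_of_pos one_pos,
    choose_two_add]
  simp only [Nat.reduceAdd, Nat.reduceSub]
  ring

lemma column_succ (ih : OscCountFormula m) :
    oscCountD GammaInf (m + 1) (ofRowLens4 1 1 1 1) = (ballot (m + 1) 0).choose 2 := by
  rw [oscCountD_succ (ofRowLens4_mem_gammaInf le_rfl le_rfl le_rfl (.inr (.inr le_rfl)))
    (L := [ofRowLens4 1 1 1 0]) (List.nodup_singleton _) fun μ => by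
    rw [mem_gammaInf_and_adjBox_ofRowLens4_iff le_rfl le_rfl le_rfl]
    have := rowLen_succ_le_four μ
    simp (disch := omega) only [List.mem_singleton, eq_ofRowLens4_iff]
    omega]
  simp [ih.hook 1 le_rfl]

end OscCountFormula

theorem oscCountFormula (m : ℕ) : OscCountFormula m := by
  induction m with
  | zero => exact oscCountFormula_zero
  | succ m ih =>
    refine ⟨fun a b hb hab => ?_, fun a => ?_, fun a ha => ?_, ih.column_succ⟩
    · obtain rfl | hb := (show b = 1 ∨ 2 ≤ b by omega)
      · obtain rfl | ha := (show a = 1 ∨ 2 ≤ a by omega)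
        · exact ih.twoRow_succ_one_one
        · exact ih.twoRow_succ_one ha
      · obtain hab | rfl := hab.lt_or_eq
        · exact ih.twoRow_succ_of_lt hb hab
        · exact ih.twoRow_succ_square hb
    · obtain rfl | ha := Nat.eq_zero_or_pos a
      · exact ih.oneRow_succ_zero
      · exact ih.oneRow_succ ha
    · obtain rfl | ha := (show a = 1 ∨ 2 ≤ a by omega)
      · exact ih.hook_succ_one
      · exact ih.hook_succ ha

section TwoRowCounts

variable {m a b : ℕ}

lemma rowsEq_pair_iff (hb : b ≤ a) {μ : YoungDiagram} :
    RowsEq μ [a, b] ↔ μ = ofRowLens4 a b 0 0 := by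
  have hrows : ∀ i, [a, b].getD i 0 = (ofRowLens4 a b 0 0).rowLen i := fun i => by
    rw [rowLen_ofRowLens4 hb (Nat.zero_le b) le_rfl]
    match i with
    | 0 | 1 | 2 | 3 | _ + 4 => rfl
  simp only [RowsEq, hrows]
  exact ⟨ext_rowLen, fun h _ => h ▸ rfl⟩

lemma oscCount_pair (hb : b ≤ a) :
    oscCount GammaInf m [a, b] = oscCountD GammaInf m (ofRowLens4 a b 0 0) :=
  Nat.card_congr <| Equiv.subtypeEquivRight fun _ => and_congr_right' (rowsEq_pair_iff hb)

lemma tabCount_pair (hb : b ≤ a) :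
    tabCount (fun _ => Set.univ) m [a, b] = tabCountD m (ofRowLens4 a b 0 0) :=
  Nat.card_congr <| Equiv.subtypeEquivRight fun _ => and_congr_right' (rowsEq_pair_iff hb)

end TwoRowCounts

theorem osc_count_eq_tab_mul_tab_inf_general (m : ℕ)
    (l₁ l₂ u₁ u₂ : ℕ)
    (hl : l₂ ≤ l₁) (hlm : l₁ + l₂ = m)
    (hu : u₂ ≤ u₁) (hum : u₁ + u₂ = m)
    (hne : (l₁, l₂) ≠ (u₁, u₂)) :
    oscCount GammaInf m [l₁ + u₁ - m, max l₁ u₁ - min l₁ u₁]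
      = tabCount (fun _ => Set.univ) m [l₁, l₂]
        * tabCount (fun _ => Set.univ) m [u₁, u₂] := by
  have hlu : l₁ ≠ u₁ := fun h => hne (by rw [h, show l₂ = u₂ by omega])
  rw [oscCount_pair (by omega), tabCount_pair hl, tabCount_pair hu,
    (oscCountFormula m).twoRow _ _ (by omega) (by omega), tabCountD_ofRowLens4 hl hlm,
    tabCountD_ofRowLens4 hu hum]
  rcases le_total l₁ u₁ with h | h
  · rw [show l₁ + u₁ - m + (max l₁ u₁ - min l₁ u₁) = u₁ - u₂ by omega,
      show l₁ + u₁ - m - (max l₁ u₁ - min l₁ u₁) = l₁ - l₂ by omega, mul_comm]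
  · rw [show l₁ + u₁ - m + (max l₁ u₁ - min l₁ u₁) = l₁ - l₂ by omega,
      show l₁ + u₁ - m - (max l₁ u₁ - min l₁ u₁) = u₁ - u₂ by omega]

/-- Theorem 2.1, equation (2) (`tensordim`), for `ℓ = ∞`:
for distinct two-row diagrams `λ = [λ₁,λ₂]`, `μ = [μ₁,μ₂]` of size `m`,
with `ν₁ = λ₁+μ₁-m`, `ν₂ = |λ₁-μ₁|`, the number of oscillating tableaux of
length `m` and shape `[ν₁,ν₂]` with shapes in `Γ(∞)` equals `|𝒯(λ)| ⬝ |𝒯(μ)|`. -/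
theorem osc_count_eq_tab_mul_tab_inf (m : ℕ) (hm : 1 ≤ m)
    (l₁ l₂ u₁ u₂ : ℕ)
    (hl : l₂ ≤ l₁) (hlm : l₁ + l₂ = m)
    (hu : u₂ ≤ u₁) (hum : u₁ + u₂ = m)
    (hne : (l₁, l₂) ≠ (u₁, u₂)) :
    oscCount GammaInf m [l₁ + u₁ - m, max l₁ u₁ - min l₁ u₁]
      = tabCount (fun _ => Set.univ) m [l₁, l₂]
        * tabCount (fun _ => Set.univ) m [u₁, u₂] :=
  osc_count_eq_tab_mul_tab_inf_general m l₁ l₂ u₁ u₂ hl hlm hu hum hne
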